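/- arXiv:1604.05290 — 2 statements merged into one kernel-verified Lean document; each statement's English description precedes it below -/
import Mathlib

section
/- Let f : ℝⁿ → ℝᵖ be smooth with f(x₀) ≠ 0. Then x₀ is a regular point of φ = f/‖f‖ (i.e. Dφ(x₀) is surjective onto the tangent space of S^{p-1} at φ(x₀)) if and only if the image of Df(x₀) together with the line spanned by f(x₀) spans all of ℝᵖ. -/
open scoped RealInnerProductSpace

/-- For f smooth with f(x₀) ≠ 0, the point x₀ is a regular point of φ = f/‖f‖
(Dφ(x₀) surjects onto the tangent space φ(x₀)^⊥ of the sphere) iff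
range(Df(x₀)) + span{f(x₀)} = ℝᵖ. -/
theorem stmt_5 {n p : ℕ}
    (f : EuclideanSpace ℝ (Fin n) → EuclideanSpace ℝ (Fin p))
    (hf : ContDiff ℝ (⊤ : ℕ∞) f)
    (x₀ : EuclideanSpace ℝ (Fin n)) (hx₀ : f x₀ ≠ 0)
    (φ : EuclideanSpace ℝ (Fin n) → EuclideanSpace ℝ (Fin p))
    (hφ : ∀ y, φ y = ‖f y‖⁻¹ • f y) :
    (∀ v : EuclideanSpace ℝ (Fin p), ⟪v, φ x₀⟫ = 0 →
        ∃ h : EuclideanSpace ℝ (Fin n), fderiv ℝ φ x₀ h = v) ↔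
      LinearMap.range (fderiv ℝ f x₀).toLinearMap ⊔
          Submodule.span ℝ {f x₀} = ⊤ := by
  set F := fderiv ℝ f x₀ with hFdef
  set N : ℝ := ‖f x₀‖ with hNdef
  have hN : N ≠ 0 := norm_ne_zero_iff.mpr hx₀
  have hfd : HasFDerivAt f F x₀ := (hf.differentiable (by simp) x₀).hasFDerivAt
  have hsq : HasFDerivAt (fun y => ‖f y‖ ^ 2)
      ((2 : ℝ) • ((innerSL ℝ (f x₀)).comp F)) x₀ := by
    have h0 := hfd.norm_sq
    rwa [← Nat.cast_smul_eq_nsmul ℝ, Nat.cast_ofNat] at h0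
  have ht₀ : (‖f x₀‖ ^ 2 : ℝ) ≠ 0 := pow_ne_zero _ hN
  have hsqrt : HasDerivAt (fun t : ℝ => (Real.sqrt t)⁻¹)
      (-(1 / (2 * Real.sqrt (‖f x₀‖ ^ 2))) / (Real.sqrt (‖f x₀‖ ^ 2)) ^ 2)
      (‖f x₀‖ ^ 2) :=
    (Real.hasDerivAt_sqrt ht₀).inv (by
      rw [Real.sqrt_sq (norm_nonneg _)]; exact hN)
  have hr : HasFDerivAt (fun y => ‖f y‖⁻¹)
      ((-(1 / (2 * Real.sqrt (‖f x₀‖ ^ 2))) / (Real.sqrt (‖f x₀‖ ^ 2)) ^ 2) •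
        ((2 : ℝ) • ((innerSL ℝ (f x₀)).comp F))) x₀ := by
    have h1 := hsqrt.comp_hasFDerivAt x₀ hsq
    have hfun : (fun y => ‖f y‖⁻¹) =
        (fun t : ℝ => (Real.sqrt t)⁻¹) ∘ (fun y => ‖f y‖ ^ 2) :=
      funext fun y => by simp [Function.comp, Real.sqrt_sq (norm_nonneg (f y))]
    rw [hfun]
    exact h1
  have hD : HasFDerivAt φ
      ((‖f x₀‖)⁻¹ • F +
        ((-(1 / (2 * Real.sqrt (‖f x₀‖ ^ 2))) / (Real.sqrt (‖f x₀‖ ^ 2)) ^ 2) •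
          ((2 : ℝ) • ((innerSL ℝ (f x₀)).comp F))).smulRight (f x₀)) x₀ := by
    have h2 := hr.smul hfd
    have : φ = fun y => ‖f y‖⁻¹ • f y := funext hφ
    rw [this]
    exact h2
  have key : ∀ h, fderiv ℝ φ x₀ h =
      N⁻¹ • F h - (N⁻¹ ^ 3 * ⟪f x₀, F h⟫) • f x₀ := by
    intro h
    rw [hD.fderiv, Real.sqrt_sq (norm_nonneg _)]
    simp only [ContinuousLinearMap.add_apply, ContinuousLinearMap.smul_apply,
      ContinuousLinearMap.smulRight_apply, ContinuousLinearMap.coe_smul',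
      Pi.smul_apply, ContinuousLinearMap.comp_apply, innerSL_apply_apply, smul_smul]
    rw [sub_eq_add_neg, ← neg_smul, ← hNdef]
    congr 2
    field_simp
    rw [smul_eq_mul, neg_mul, mul_neg, one_div, mul_inv_cancel_left₀ (pow_ne_zero 3 hN)]
  have hu : φ x₀ = N⁻¹ • f x₀ := hφ x₀
  constructor
  · intro hsurj
    rw [eq_top_iff]
    rintro z -
    set c : ℝ := ⟪z, φ x₀⟫ with hc
    have hunorm : ⟪φ x₀, φ x₀⟫ = 1 := by
      rw [hu, real_inner_smul_left, real_inner_smul_right,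
        real_inner_self_eq_norm_sq, ← hNdef]
      field_simp
    have hv : ⟪z - c • φ x₀, φ x₀⟫ = 0 := by
      rw [inner_sub_left, real_inner_smul_left, hunorm]
      simp [hc]
    obtain ⟨h, hh⟩ := hsurj _ hv
    have hz : z = fderiv ℝ φ x₀ h + c • φ x₀ := by rw [hh]; abel
    rw [hz, key h, hu]
    apply Submodule.add_mem
    · apply Submodule.sub_mem
      · exact Submodule.mem_sup_left ⟨N⁻¹ • h, by simp⟩
      · exact Submodule.mem_sup_right (Submodule.smul_mem _ _
          (Submodule.mem_span_singleton_self _))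
    · exact Submodule.mem_sup_right (Submodule.smul_mem _ _
        (Submodule.smul_mem _ _ (Submodule.mem_span_singleton_self _)))
  · intro htop v hv
    have hvmem : v ∈ LinearMap.range F.toLinearMap ⊔ Submodule.span ℝ {f x₀} :=
      htop ▸ Submodule.mem_top
    obtain ⟨w, hw, w', hw', hvw⟩ := Submodule.mem_sup.mp hvmem
    obtain ⟨h, hh⟩ := hw
    obtain ⟨c, hc⟩ := Submodule.mem_span_singleton.mp hw'
    refine ⟨N • h, ?_⟩
    have hfv : ⟪f x₀, v⟫ = 0 := by
      rw [real_inner_comm]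
      have h3 := hv
      rw [hu, real_inner_smul_right] at h3
      rcases mul_eq_zero.mp h3 with h' | h'
      · exact absurd h' (inv_ne_zero hN)
      · exact h'
    simp only [ContinuousLinearMap.coe_coe] at hh
    have hFh : F h = v - c • f x₀ := by
      rw [← hh, ← hc] at hvw
      rw [← hvw]; abel
    rw [key, map_smul, hFh, real_inner_smul_right, inner_sub_right, hfv,
      real_inner_smul_right, real_inner_self_eq_norm_sq, ← hNdef]
    match_scalars <;> (field_simp [hN]; try ring)
end

section
/- Let f : ℝⁿ → ℝᵖ be smooth, and let x be a point with f(x) ≠ 0 at which f is a submersion. Let L = span{f(x)} and ε = ‖x‖ > 0. Then X_L is transverse at x to the sphere S_ε of radius ε centered at 0 if and only if φ = f/‖f‖ restricted to S_ε is a submersion at x. -/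
open scoped RealInnerProductSpace

/-- For f a submersion at x with f(x) ≠ 0, L = span{f(x)} and ε = ‖x‖ > 0,
the pencil member X_L (with tangent space Df(x)⁻¹(L)) is transverse at x to
the sphere S_ε (with tangent space x^⊥) iff φ = f/‖f‖ restricted to S_ε is a
submersion at x, i.e. Dφ(x) restricted to x^⊥ surjects onto φ(x)^⊥. -/
theorem stmt_7 {n p : ℕ}
    (f : EuclideanSpace ℝ (Fin n) → EuclideanSpace ℝ (Fin p))
    (hf : ContDiff ℝ (⊤ : ℕ∞) f)
    (x : EuclideanSpace ℝ (Fin n)) (hx0 : x ≠ 0) (hfx : f x ≠ 0)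
    (hsub : Function.Surjective (fderiv ℝ f x))
    (L : Submodule ℝ (EuclideanSpace ℝ (Fin p)))
    (hL : L = Submodule.span ℝ {f x})
    (φ : EuclideanSpace ℝ (Fin n) → EuclideanSpace ℝ (Fin p))
    (hφ : ∀ y, φ y = ‖f y‖⁻¹ • f y) :
    (L.comap (fderiv ℝ f x).toLinearMap ⊔ (Submodule.span ℝ {x})ᗮ = ⊤) ↔
      (∀ v : EuclideanSpace ℝ (Fin p), ⟪v, φ x⟫ = 0 →
        ∃ h : EuclideanSpace ℝ (Fin n), ⟪h, x⟫ = 0 ∧ fderiv ℝ φ x h = v) := by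
  set D := fderiv ℝ f x with hDdef
  set c : ℝ := ‖f x‖ with hc
  have hc0 : c ≠ 0 := norm_ne_zero_iff.mpr hfx
  have hD : HasFDerivAt f D x := (hf.differentiable (by simp) x).hasFDerivAt
  -- derivative of y ↦ ‖f y‖
  have hq : HasFDerivAt (fun y => ‖f y‖ ^ 2) (2 • (innerSL ℝ (f x)).comp D) x :=
    hD.norm_sq
  have hnorm : HasFDerivAt (fun y => ‖f y‖)
      ((1 / (2 * Real.sqrt (‖f x‖ ^ 2))) • (2 • (innerSL ℝ (f x)).comp D)) x := by
    have : HasFDerivAt (fun y => Real.sqrt (‖f y‖ ^ 2))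
        ((1 / (2 * Real.sqrt (‖f x‖ ^ 2))) • (2 • (innerSL ℝ (f x)).comp D)) x :=
      hq.sqrt (by positivity)
    simpa [Real.sqrt_sq (norm_nonneg _)] using this
  have hinv : HasFDerivAt (fun y => ‖f y‖⁻¹)
      ((-(c ^ 2)⁻¹) • ((1 / (2 * Real.sqrt (‖f x‖ ^ 2))) • (2 • (innerSL ℝ (f x)).comp D))) x := by
    have := (hasDerivAt_inv hc0).comp_hasFDerivAt x hnorm
    simpa [smul_smul, Function.comp_def] using this
  have hφD : HasFDerivAt φ
      (c⁻¹ • D + ((-(c ^ 2)⁻¹) • ((1 / (2 * Real.sqrt (‖f x‖ ^ 2))) •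
        (2 • (innerSL ℝ (f x)).comp D))).smulRight (f x)) x := by
    have := hinv.smul hD
    have hfun : ((fun y => ‖f y‖⁻¹) • f) = φ := by funext y; exact (hφ y).symm
    rw [hfun] at this
    exact this
  set e := fderiv ℝ φ x with he
  have heD : e = c⁻¹ • D + ((-(c ^ 2)⁻¹) • ((1 / (2 * Real.sqrt (‖f x‖ ^ 2))) •
        (2 • (innerSL ℝ (f x)).comp D))).smulRight (f x) := hφD.fderiv
  have hkey : ∀ h, e h = c⁻¹ • D h - ((c ^ 3)⁻¹ * ⟪f x, D h⟫) • f x := by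
    intro h
    rw [heD]
    simp only [ContinuousLinearMap.add_apply, ContinuousLinearMap.smul_apply,
      ContinuousLinearMap.smulRight_apply, ContinuousLinearMap.comp_apply, innerSL_apply_apply,
      smul_eq_mul, Real.sqrt_sq (norm_nonneg _), sub_eq_add_neg, ← neg_smul]
    congr 2
    field_simp
    ring
  have hφx : φ x = c⁻¹ • f x := hφ x
  constructor
  · intro htrans v hv
    have hvf : ⟪f x, v⟫ = 0 := by
      have : ⟪v, c⁻¹ • f x⟫ = 0 := by rw [← hφx]; exact hv
      rw [real_inner_smul_right] at this
      rcases mul_eq_zero.mp this with h | h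
      · exact absurd h (inv_ne_zero hc0)
      · rw [real_inner_comm]; exact h
    obtain ⟨w, hw⟩ := hsub (c • v)
    have hwmem : w ∈ L.comap D.toLinearMap ⊔ (Submodule.span ℝ {x})ᗮ := by
      rw [htrans]; trivial
    obtain ⟨a, ha, b, hb, hab⟩ := Submodule.mem_sup.mp hwmem
    refine ⟨b, ?_, ?_⟩
    · have := hb x (Submodule.mem_span_singleton_self x)
      rw [real_inner_comm] at this
      exact this
    · have hDa : D a ∈ Submodule.span ℝ {f x} := by
        have := Submodule.mem_comap.mp ha
        rwa [hL] at this
      obtain ⟨t, ht⟩ := Submodule.mem_span_singleton.mp hDa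
      have hea : e a = 0 := by
        rw [hkey, ← ht, real_inner_smul_right, real_inner_self_eq_norm_sq, ← hc,
          smul_smul, ← sub_smul]
        convert zero_smul ℝ (f x)
        field_simp
        ring
      have hew : e w = v := by
        rw [hkey, hw, real_inner_smul_right, hvf, mul_zero, mul_zero, zero_smul,
          sub_zero, smul_smul, inv_mul_cancel₀ hc0, one_smul]
      have hb' : b = w - a := by rw [← hab]; abel
      rw [hb', map_sub, hea, hew, sub_zero]
  · intro hsurj
    rw [eq_top_iff]
    intro w _
    have hvperp : ⟪e w, φ x⟫ = 0 := by
      rw [hkey, hφx, inner_sub_left, real_inner_smul_left, real_inner_smul_left,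
        real_inner_smul_right, real_inner_smul_right, real_inner_self_eq_norm_sq, ← hc,
        real_inner_comm]
      field_simp
      ring
    obtain ⟨h, hhx, hhe⟩ := hsurj (e w) hvperp
    have h1 : h ∈ (Submodule.span ℝ {x})ᗮ := by
      intro u hu
      obtain ⟨t, ht⟩ := Submodule.mem_span_singleton.mp hu
      rw [← ht, real_inner_smul_left, real_inner_comm, hhx, mul_zero]
    have h2 : w - h ∈ L.comap D.toLinearMap := by
      rw [Submodule.mem_comap, hL]
      have hez : e (w - h) = 0 := by rw [map_sub, hhe, sub_self]
      rw [hkey] at hez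
      have : c⁻¹ • D (w - h) = ((c ^ 3)⁻¹ * ⟪f x, D (w - h)⟫) • f x := by
        rwa [sub_eq_zero] at hez
      have hD' : D (w - h) = (c * ((c ^ 3)⁻¹ * ⟪f x, D (w - h)⟫)) • f x := by
        have := congrArg (fun z => c • z) this
        simpa [smul_smul, mul_inv_cancel₀ hc0] using this
      show D (w - h) ∈ Submodule.span ℝ {f x}
      rw [hD']
      exact Submodule.smul_mem _ _ (Submodule.mem_span_singleton_self _)
    have : w = (w - h) + h := by abel
    rw [this]
    exact Submodule.add_mem _ (Submodule.mem_sup_left h2) (Submodule.mem_sup_right h1)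
end
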